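/- For every integer k with k ≥ 20, all natural numbers n, l₁ ≥ 0, and l := l₁ + k, one has Γ(n + k/2) · Γ(n + l - k/2 + 5/2) / (n! · Γ(n + l + 3/2)) ≤ exp(- l·k / (8(n + l))). -/
import Mathlib

open Real Finset

lemma Gamma_telescope (x : ℝ) (hx : 0 < x) (M : ℕ) :
    Real.Gamma (x + M) = (∏ j ∈ Finset.range M, (x + j)) * Real.Gamma x := by
  induction M with
  | zero => simp
  | succ m ih =>
      have h1 : x + ((m + 1 : ℕ) : ℝ) = (x + m) + 1 := by push_cast; ring
      rw [h1, Real.Gamma_add_one (by positivity), ih, Finset.prod_range_succ]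
      ring

lemma key_prod (x y : ℝ) (M : ℕ) (hx : 0 < x) (hxy : x ≤ y) :
    Real.Gamma (x + M) * Real.Gamma y / (Real.Gamma x * Real.Gamma (y + M)) ≤
      Real.exp (-((M : ℝ) * (y - x)) / (y + M)) := by
  have hy : 0 < y := lt_of_lt_of_le hx hxy
  have hyM : 0 < y + M := by positivity
  have hgx := Real.Gamma_pos_of_pos hx
  have hgy := Real.Gamma_pos_of_pos hy
  have hQ : 0 < ∏ j ∈ Finset.range M, (y + (j : ℝ)) := by
    apply Finset.prod_pos; intro j _; positivity
  have hstep : Real.Gamma (x + M) * Real.Gamma y / (Real.Gamma x * Real.Gamma (y + M))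
      = ∏ j ∈ Finset.range M, ((x + (j : ℝ)) / (y + (j : ℝ))) := by
    rw [Gamma_telescope x hx M, Gamma_telescope y hy M, Finset.prod_div_distrib]
    field_simp
  rw [hstep]
  have hρ : (x + M) / (y + M) ≤ Real.exp (-((y - x) / (y + M))) := by
    have h2 : (x + M) / (y + M) = -((y - x) / (y + M)) + 1 := by
      field_simp
      ring
    rw [h2]; exact Real.add_one_le_exp _
  calc ∏ j ∈ Finset.range M, ((x + (j:ℝ)) / (y + (j:ℝ)))
      ≤ ∏ _j ∈ Finset.range M, Real.exp (-((y - x) / (y + M))) := by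
        apply Finset.prod_le_prod
        · intro j _; positivity
        · intro j hj
          refine le_trans ?_ hρ
          have hjM : (j : ℝ) ≤ M := by
            exact_mod_cast Nat.le_of_lt (Finset.mem_range.mp hj)
          rw [div_le_div_iff₀ (by positivity) hyM]
          nlinarith [mul_nonneg (sub_nonneg.2 hxy) (sub_nonneg.2 hjM)]
    _ = Real.exp (-((y - x) / (y + M))) ^ M := by
        rw [Finset.prod_const, Finset.card_range]
    _ = Real.exp (-((M : ℝ) * (y - x)) / (y + M)) := by
        rw [← Real.exp_nat_mul]; congr 1; field_simp

lemma even_arith (A L N : ℝ) (hA : 10 ≤ A) (hL : 2*A ≤ L) (hN : 0 ≤ N) :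
    L*(2*A)*(N+L+3/2) ≤ 8*((A-1)*(L+3/2-A))*(N+L) := by
  have hA0 : (0:ℝ) ≤ A := by linarith
  have hL0 : (0:ℝ) ≤ L := by linarith
  have hP : (0:ℝ) ≤ N + L := by linarith
  have hP20 : (0:ℝ) ≤ N + L - 20 := by linarith
  nlinarith [mul_nonneg (mul_nonneg hA0 (by linarith : (0:ℝ) ≤ L - 2*A)) hP,
    mul_nonneg (mul_nonneg (by linarith : (0:ℝ) ≤ A - 10) hL0) hP,
    mul_nonneg (mul_nonneg hA0 hL0) hP20,
    mul_nonneg hA0 hL0, mul_nonneg hL0 hP, mul_nonneg hA0 hP, hP]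

lemma odd_arith (A L N : ℝ) (hA : 10 ≤ A) (hL : 2*A + 1 ≤ L) (hN : 0 ≤ N) :
    L*(2*A+1)*(N+L+3/2) ≤ 8*((L+1-A)*(A-1/2))*(N+L) := by
  have hA0 : (0:ℝ) ≤ A := by linarith
  have hL0 : (0:ℝ) ≤ L := by linarith
  have hP : (0:ℝ) ≤ N + L := by linarith
  have hP21 : (0:ℝ) ≤ N + L - 21 := by linarith
  nlinarith [mul_nonneg (mul_nonneg hA0 (by linarith : (0:ℝ) ≤ L - 2*A - 1)) hP,
    mul_nonneg (mul_nonneg (by linarith : (0:ℝ) ≤ A - 10) hL0) hP,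
    mul_nonneg (mul_nonneg hA0 hL0) hP21,
    mul_nonneg hA0 hL0, mul_nonneg hL0 hP, mul_nonneg hA0 hP, hP]

theorem gamma_ratio_exp_decay (k n l₁ l : ℕ) (hk : 20 ≤ k) (hl : l = l₁ + k) :
    Real.Gamma ((n : ℝ) + k/2) * Real.Gamma ((n : ℝ) + l - k/2 + 5/2) /
        ((n.factorial : ℝ) * Real.Gamma ((n : ℝ) + l + 3/2)) ≤
      Real.exp (-((l : ℝ) * k) / (8 * ((n : ℝ) + l))) := by
  have hlk : k ≤ l := by omega
  have hfact : ((n.factorial : ℝ)) = Real.Gamma ((n : ℝ) + 1) := by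
    rw [Real.Gamma_nat_eq_factorial]
  have hNL : (0:ℝ) < (n : ℝ) + l := by
    have : (20:ℝ) ≤ (l:ℝ) := by exact_mod_cast le_trans hk hlk
    positivity
  rcases Nat.even_or_odd k with ⟨a, ha⟩ | ⟨a, ha⟩
  · -- k = a + a
    have ha' : k = 2 * a := by omega
    have ha10 : 10 ≤ a := by omega
    set x : ℝ := (n : ℝ) + 1 with hxdef
    set y : ℝ := (n : ℝ) + l + 5/2 - a with hydef
    have hA : (10:ℝ) ≤ (a:ℝ) := by exact_mod_cast ha10
    have hL : 2 * (a:ℝ) ≤ (l:ℝ) := by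
      have : 2 * a ≤ l := by omega
      exact_mod_cast this
    have hN : (0:ℝ) ≤ (n:ℝ) := Nat.cast_nonneg n
    have hM : ((a - 1 : ℕ) : ℝ) = (a:ℝ) - 1 := by
      have : 1 ≤ a := by omega
      push_cast [Nat.cast_sub this]; ring
    have hkr : (k:ℝ) = 2 * (a:ℝ) := by exact_mod_cast ha'
    have e1 : (n : ℝ) + k/2 = x + ((a-1:ℕ):ℝ) := by rw [hM, hkr, hxdef]; ring
    have e2 : (n : ℝ) + l - k/2 + 5/2 = y := by rw [hkr, hydef]; ring
    have e3 : (n : ℝ) + l + 3/2 = y + ((a-1:ℕ):ℝ) := by rw [hM, hydef]; ring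
    rw [e1, e2, e3, hfact]
    have hx : (0:ℝ) < x := by rw [hxdef]; positivity
    have hxy : x ≤ y := by rw [hxdef, hydef]; linarith
    refine le_trans (key_prod x y (a-1) hx hxy) ?_
    rw [Real.exp_le_exp, hM, hxdef, hydef, hkr]
    rw [div_le_div_iff₀ (by linarith) (by positivity)]
    linarith [even_arith (a:ℝ) (l:ℝ) (n:ℝ) hA hL hN]
  · -- k = 2a+1
    have ha10 : 10 ≤ a := by omega
    set x : ℝ := (n : ℝ) + 1 with hxdef
    set y : ℝ := (n : ℝ) + a + 1/2 with hydef
    have hA : (10:ℝ) ≤ (a:ℝ) := by exact_mod_cast ha10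
    have hL : 2 * (a:ℝ) + 1 ≤ (l:ℝ) := by
      have : 2 * a + 1 ≤ l := by omega
      exact_mod_cast this
    have hN : (0:ℝ) ≤ (n:ℝ) := Nat.cast_nonneg n
    have hM : ((l + 1 - a : ℕ) : ℝ) = (l:ℝ) + 1 - a := by
      have : a ≤ l + 1 := by omega
      push_cast [Nat.cast_sub this]; ring
    have hkr : (k:ℝ) = 2 * (a:ℝ) + 1 := by exact_mod_cast ha
    have e1 : (n : ℝ) + k/2 = y := by rw [hkr, hydef]; ring
    have e2 : (n : ℝ) + l - k/2 + 5/2 = x + ((l+1-a:ℕ):ℝ) := by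
      rw [hM, hkr, hxdef]; ring
    have e3 : (n : ℝ) + l + 3/2 = y + ((l+1-a:ℕ):ℝ) := by rw [hM, hydef]; ring
    rw [e1, e2, e3, hfact, mul_comm (Real.Gamma y)]
    have hx : (0:ℝ) < x := by rw [hxdef]; positivity
    have hxy : x ≤ y := by rw [hxdef, hydef]; linarith
    refine le_trans (key_prod x y (l+1-a) hx hxy) ?_
    rw [Real.exp_le_exp, hM, hxdef, hydef, hkr]
    rw [div_le_div_iff₀ (by linarith) (by positivity)]
    linarith [odd_arith (a:ℝ) (l:ℝ) (n:ℝ) hA hL hN]
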